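/- Let X = (V,E) be a digraph with |V| = n. Suppose p and q are polynomials with rational coefficients such that for every positive integer m, p(m) equals the number of pairs (f, σ) with f : V → {1,…,m} and σ an (f,X)-friendly V-listing, and q(m) equals the corresponding count for the complement of X. Then p(−x) = (−1)^n q(x) as polynomials; in particular p(−m) = (−1)^n q(m) for every integer m. (Reciprocity for the Redei-Berge polynomial: u_X(−m) = (−1)^{|V|} u_{complement of X}(m).) -/

import Mathlib

/-- A listing `l = (σ_1, …, σ_n)` is `(f,X)`-friendly if
`f(σ_1) ≤ f(σ_2) ≤ ⋯ ≤ f(σ_n)` and `f(σ_j) < f(σ_{j+1})` for each `j ∈ [n-1]`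
with `(σ_j, σ_{j+1})` an edge of `X`. -/
def Friendly {V : Type*} (E : V → V → Prop) (f : V → ℕ) (l : List V) : Prop :=
  l.Chain' (fun u v => f u ≤ f v) ∧
  ∀ i : ℕ, ∀ (h1 : 1 ≤ i) (h2 : i ≤ l.length - 1),
    E (l.get ⟨i - 1, by omega⟩) (l.get ⟨i, by omega⟩) →
      f (l.get ⟨i - 1, by omega⟩) < f (l.get ⟨i, by omega⟩)

/-- `N_X(m)`: the number of pairs `(f, σ)` with `f : V → {1, …, m}` a coloring and `σ`
an `(f,X)`-friendly `V`-listing (the value of the Redei-Berge polynomial at `m`). -/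
noncomputable def RBCount (V : Type*) [Fintype V] (E : V → V → Prop) (m : ℕ) : ℕ :=
  Nat.card {p : (V → ℕ) × List V //
    (∀ x, 1 ≤ p.1 x ∧ p.1 x ≤ m) ∧ p.2.Nodup ∧ (∀ x, x ∈ p.2) ∧ Friendly E p.1 p.2}

/-- Edge relation of the complement digraph: pairs `(u,v)` with `u ≠ v` not in `E`. -/
def complEdge {V : Type*} (E : V → V → Prop) (u v : V) : Prop :=
  u ≠ v ∧ ¬ E u v

/-
For a fixed listing `σ` with `w` weak steps (consecutive pairs that are not edges of `X`), the
colorings making `σ` friendly are the weakly increasing sequences `c` along `σ` in `[1, m]` that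
increase strictly at the remaining `n - 1 - w` steps. Adding to each term the number of weak steps
before it turns them bijectively into the strictly increasing sequences in `[1, m + w]`, so there
are `C(m + w, n)` of them and `u_X(x) = ∑_σ C(x + w_σ, n)`. The weak steps of `σ` in the
complement are exactly its edge steps in `X`, so `w_σ + w̄_σ = n - 1`, and binomial reciprocity
`C(-x + w, n) = (-1)^n C(x + n - 1 - w, n)` gives the theorem term by term.
-/

open Finset Polynomial

lemma card_strictMono_Icc (k M : ℕ) :
    Nat.card {g : Fin k → ℕ // StrictMono g ∧ ∀ j, 1 ≤ g j ∧ g j ≤ M} = M.choose k := by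
  let e : {g : Fin k → ℕ // StrictMono g ∧ ∀ j, 1 ≤ g j ∧ g j ≤ M} ≃ (Fin k ↪o Set.Icc 1 M) :=
    { toFun g := OrderEmbedding.ofStrictMono (fun j => ⟨g.1 j, g.2.2 j⟩) fun _ _ h => g.2.1 h
      invFun e := ⟨fun j => e j, fun _ _ h => e.strictMono h, fun j => (e j).2⟩
      left_inv _ := rfl
      right_inv _ := rfl }
  rw [Nat.card_congr (e.trans Set.powersetCard.ofFinEmbEquiv), Set.powersetCard.card]
  simp

lemma Fin.val_lt_of_strictMono {k : ℕ} {g : Fin (k + 1) → ℕ} (hg : StrictMono g) (h0 : 0 < g 0)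
    (j : Fin (k + 1)) : (j : ℕ) < g j := by
  induction j using Fin.induction with
  | zero => exact h0
  | succ i ih =>
    have := hg (Fin.castSucc_lt_succ (i := i))
    simp only [Fin.val_succ, Fin.val_castSucc] at ih ⊢
    omega

section StepMono
variable {k : ℕ} (s : Fin k → Prop)

def StepMono (c : Fin (k + 1) → ℕ) : Prop :=
  ∀ i : Fin k, c i.castSucc ≤ c i.succ ∧ (s i → c i.castSucc < c i.succ)

variable {s} in
lemma StepMono.monotone {c : Fin (k + 1) → ℕ} (h : StepMono s c) : Monotone c :=
  Fin.monotone_iff_le_succ.2 fun i => (h i).1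

variable [DecidablePred s]

def weakShift : Fin (k + 1) → ℕ := Fin.partialSum fun i => if s i then 0 else 1

lemma weakShift_succ (i : Fin k) :
    weakShift s i.succ = weakShift s i.castSucc + if s i then 0 else 1 :=
  Fin.partialSum_succ _ _

lemma weakShift_last : weakShift s (Fin.last k) = #{i | ¬ s i} := by
  rw [weakShift, Fin.partialSum, Fin.val_last, List.take_of_length_le (by simp), List.sum_ofFn,
    card_filter]
  simp only [ite_not]

lemma weakShift_le (j : Fin (k + 1)) : weakShift s j ≤ j := by
  induction j using Fin.induction with
  | zero => simp [weakShift]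
  | succ i ih =>
    rw [weakShift_succ]
    simp only [Fin.val_succ, Fin.val_castSucc] at ih ⊢
    split_ifs <;> omega

lemma stepMono_iff_strictMono_add (c : Fin (k + 1) → ℕ) :
    StepMono s c ↔ StrictMono (c + weakShift s) := by
  rw [Fin.strictMono_iff_lt_succ]
  refine forall_congr' fun i => ?_
  by_cases hi : s i <;>
    simp only [Pi.add_apply, weakShift_succ, hi, if_true, if_false, true_implies, false_implies,
      and_true] <;> omega

lemma card_stepMono_Icc (m : ℕ) :
    Nat.card {c : Fin (k + 1) → ℕ // (∀ j, 1 ≤ c j ∧ c j ≤ m) ∧ StepMono s c} =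
      (m + #{i | ¬ s i}).choose (k + 1) := by
  rw [← card_strictMono_Icc, ← weakShift_last]
  have shift_lt {g : Fin (k + 1) → ℕ} (hg : StrictMono g) (h0 : 1 ≤ g 0) (j) :
      weakShift s j < g j :=
    (weakShift_le s j).trans_lt (Fin.val_lt_of_strictMono hg h0 j)
  refine Nat.card_congr
    { toFun c := ⟨c.1 + weakShift s, (stepMono_iff_strictMono_add s c.1).1 c.2.2, fun j => ?_⟩
      invFun g := ⟨g.1 - weakShift s, ?_⟩
      left_inv c := Subtype.ext (add_tsub_cancel_right _ _)
      right_inv g := Subtype.ext <| tsub_add_cancel_of_le fun j =>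
        (shift_lt g.2.1 (g.2.2 0).1 j).le }
  · have hg := ((stepMono_iff_strictMono_add s c.1).1 c.2.2).monotone (Fin.le_last j)
    have := (c.2.1 j).1
    have := (c.2.1 (Fin.last k)).2
    simp only [Pi.add_apply] at hg ⊢
    omega
  · obtain ⟨g, hg, hgM⟩ := g
    have hmono : StepMono s (g - weakShift s) := by
      rw [stepMono_iff_strictMono_add, tsub_add_cancel_of_le fun j => (shift_lt hg (hgM 0).1 j).le]
      exact hg
    refine ⟨fun j => ⟨?_, ?_⟩, hmono⟩
    · have := shift_lt hg (hgM 0).1 j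
      simp only [Pi.sub_apply]
      omega
    · have hj := hmono.monotone (Fin.le_last j)
      have := (hgM (Fin.last k)).2
      simp only [Pi.sub_apply] at hj ⊢
      omega

end StepMono

lemma Polynomial.eq_of_eval_natCast_eq {R : Type*} [CommRing R] [IsDomain R] [CharZero R]
    {p q : R[X]} (h : ∀ m : ℕ, 1 ≤ m → p.eval (m : R) = q.eval (m : R)) : p = q := by
  refine eq_of_infinite_eval_eq p q
    (Set.Infinite.mono ?_ ((Set.Ici_infinite 1).image Nat.cast_injective.injOn))
  rintro _ ⟨m, hm, rfl⟩
  exact h m hm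

noncomputable def binomPoly (n : ℕ) (c : ℚ) : ℚ[X] :=
  C (n.factorial : ℚ)⁻¹ * (descPochhammer ℚ n).comp (X + C c)

lemma binomPoly_eval (n : ℕ) (c x : ℚ) :
    (binomPoly n c).eval x = (n.factorial : ℚ)⁻¹ * (descPochhammer ℚ n).eval (x + c) := by
  simp [binomPoly, eval_comp]

lemma binomPoly_eval_natCast (n a m : ℕ) :
    (binomPoly n a).eval (m : ℚ) = ((m + a).choose n : ℚ) := by
  rw [binomPoly_eval, Nat.cast_choose_eq_descPochhammer_div, Nat.cast_add, div_eq_inv_mul]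

lemma binomPoly_comp_neg (n : ℕ) (c : ℚ) :
    (binomPoly n c).comp (-X) = (-1) ^ n * binomPoly n (n - 1 - c) := by
  refine Polynomial.funext fun x => ?_
  have : -x + c - n + 1 = -(x + (n - 1 - c)) := by ring
  rw [eval_comp, eval_neg, eval_X, eval_mul, eval_pow, eval_neg, eval_one, binomPoly_eval,
    binomPoly_eval, descPochhammer_eval_eq_ascPochhammer, this,
    ascPochhammer_eval_neg_eq_descPochhammer]
  ring

section RedeiBerge
variable {V : Type*}

lemma friendly_iff {E : V → V → Prop} {f : V → ℕ} {l : List V} :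
    Friendly E f l ↔ ∀ i (h : i + 1 < l.length),
      f l[i] ≤ f l[i + 1] ∧ (E l[i] l[i + 1] → f l[i] < f l[i + 1]) := by
  rw [Friendly, List.Chain', List.isChain_iff_getElem]
  constructor
  · rintro ⟨hle, hlt⟩ i h
    exact ⟨hle i h, hlt (i + 1) (by omega) (by omega)⟩
  · intro h
    refine ⟨fun i hi => (h i hi).1, fun i h1 h2 => ?_⟩
    obtain ⟨j, rfl⟩ : ∃ j, i = j + 1 := ⟨i - 1, by omega⟩
    exact (h j (by omega)).2

open scoped Classical in
noncomputable def weakSteps (E : V → V → Prop) (l : List V) : ℕ :=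
  #{i : Fin (l.length - 1) | ¬ E l[i.1] l[i.1 + 1]}

lemma weakSteps_add_weakSteps_complEdge (E : V → V → Prop) {l : List V} (hl : l.Nodup) :
    weakSteps E l + weakSteps (complEdge E) l = l.length - 1 := by
  classical
  have hcompl : ∀ i : Fin (l.length - 1),
      ¬ complEdge E l[i.1] l[i.1 + 1] ↔ E l[i.1] l[i.1 + 1] := by
    intro i
    have hne : l[i.1] ≠ l[i.1 + 1] := fun h => by
      have := hl.getElem_inj_iff.1 h
      omega
    simp [complEdge, hne]
  rw [weakSteps, weakSteps, filter_congr fun i _ => hcompl i, add_comm]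
  convert card_filter_add_card_filter_not (s := univ) _
  simp

lemma card_friendly (E : V → V → Prop) {l : List V} (hl : l.Nodup) (hV : ∀ x, x ∈ l) (m : ℕ) :
    Nat.card {f : V → ℕ // (∀ x, 1 ≤ f x ∧ f x ≤ m) ∧ Friendly E f l} =
      (m + weakSteps E l).choose l.length := by
  cases l with
  | nil =>
    have : IsEmpty V := ⟨fun x => by simpa using hV x⟩
    rw [List.length_nil, Nat.choose_zero_right, Nat.card_eq_one_iff_unique]
    exact ⟨⟨fun _ _ => Subtype.ext (funext isEmptyElim)⟩,
      ⟨⟨isEmptyElim, isEmptyElim, friendly_iff.2 fun _ h => absurd h (Nat.not_lt_zero _)⟩⟩⟩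
  | cons u t =>
    classical
    let e := hl.getEquivOfForallMemList _ hV
    refine (Nat.card_congr <| (e.arrowCongr (.refl ℕ)).symm.subtypeEquiv fun f => ?_).trans
      (card_stepMono_Icc (fun i : Fin t.length => E (e i.castSucc) (e i.succ)) m)
    refine and_congr e.forall_congr_right.symm ?_
    rw [friendly_iff, StepMono, Fin.forall_iff]
    simp only [List.length_cons, add_lt_add_iff_right]
    rfl

variable (V) [Fintype V]

abbrev Listing : Type _ := {l : List V // l.Nodup ∧ ∀ x, x ∈ l}

noncomputable instance : Fintype (Listing V) :=
  have : Finite (Listing V) :=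
    Finite.of_injective (fun l => (⟨l.1, l.2.1⟩ : {l : List V // l.Nodup}))
      fun _ _ h => Subtype.ext (congrArg Subtype.val h :)
  Fintype.ofFinite _

noncomputable def rbPoly (E : V → V → Prop) : ℚ[X] :=
  ∑ l : Listing V, binomPoly (Fintype.card V) (weakSteps E l.1)

variable {V}

lemma Listing.length_eq (l : Listing V) : l.1.length = Fintype.card V := by
  classical
  simpa using Fintype.card_congr (l.2.1.getEquivOfForallMemList _ l.2.2)

lemma finite_bounded_colorings (m : ℕ) (P : (V → ℕ) → Prop) :
    Finite {f : V → ℕ // (∀ x, 1 ≤ f x ∧ f x ≤ m) ∧ P f} :=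
  Finite.of_injective (fun f x => (⟨f.1 x, Nat.lt_succ_of_le (f.2.1 x).2⟩ : Fin (m + 1)))
    fun _ _ h => Subtype.ext (funext fun x => congrArg Fin.val (congrFun h x))

lemma rbCount_eq_sum (E : V → V → Prop) (m : ℕ) :
    RBCount V E m = ∑ l : Listing V, (m + weakSteps E l.1).choose (Fintype.card V) := by
  let e : {p : (V → ℕ) × List V //
      (∀ x, 1 ≤ p.1 x ∧ p.1 x ≤ m) ∧ p.2.Nodup ∧ (∀ x, x ∈ p.2) ∧ Friendly E p.1 p.2} ≃
      Σ l : Listing V, {f : V → ℕ // (∀ x, 1 ≤ f x ∧ f x ≤ m) ∧ Friendly E f l.1} :=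
    { toFun p := ⟨⟨p.1.2, p.2.2.1, p.2.2.2.1⟩, ⟨p.1.1, p.2.1, p.2.2.2.2⟩⟩
      invFun p := ⟨(p.2.1, p.1.1), p.2.2.1, p.1.2.1, p.1.2.2, p.2.2.2⟩
      left_inv _ := rfl
      right_inv _ := rfl }
  have := fun l : Listing V => finite_bounded_colorings m (fun f => Friendly E f l.1)
  rw [RBCount, Nat.card_congr e, Nat.card_sigma]
  exact sum_congr rfl fun l _ => by rw [card_friendly E l.2.1 l.2.2, l.length_eq]

lemma rbPoly_eval_natCast (E : V → V → Prop) (m : ℕ) :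
    (rbPoly V E).eval (m : ℚ) = RBCount V E m := by
  simp only [rbPoly, eval_finsetSum, binomPoly_eval_natCast, rbCount_eq_sum, Nat.cast_sum]

lemma rbPoly_comp_neg (E : V → V → Prop) :
    (rbPoly V E).comp (-X) = (-1) ^ Fintype.card V * rbPoly V (complEdge E) := by
  rw [rbPoly, rbPoly, Polynomial.sum_comp, mul_sum]
  refine sum_congr rfl fun l _ => ?_
  rw [binomPoly_comp_neg]
  rcases Nat.eq_zero_or_pos (Fintype.card V) with h0 | hpos
  · simp [h0, binomPoly]
  · have h := weakSteps_add_weakSteps_complEdge E l.2.1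
    rw [l.length_eq] at h
    have hsum : (weakSteps E l.1 : ℚ) + weakSteps (complEdge E) l.1 = Fintype.card V - 1 := by
      rw [← Nat.cast_add, h, Nat.cast_sub hpos, Nat.cast_one]
    congr 2
    linarith

end RedeiBerge

theorem RB_reciprocity_general {V : Type*} [Fintype V]
    (E : V → V → Prop)
    (p q : Polynomial ℚ)
    (hp : ∀ m : ℕ, 1 ≤ m → p.eval (m : ℚ) = RBCount V E m)
    (hq : ∀ m : ℕ, 1 ≤ m → q.eval (m : ℚ) = RBCount V (complEdge E) m) :
    p.comp (-Polynomial.X) = (-1) ^ (Fintype.card V) * q ∧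
      ∀ m : ℤ, p.eval (-(m : ℚ)) = (-1) ^ (Fintype.card V) * q.eval (m : ℚ) := by
  have hpE : p = rbPoly V E :=
    eq_of_eval_natCast_eq fun m hm => by rw [hp m hm, rbPoly_eval_natCast]
  have hqE : q = rbPoly V (complEdge E) :=
    eq_of_eval_natCast_eq fun m hm => by rw [hq m hm, rbPoly_eval_natCast]
  have hcomp : p.comp (-X) = (-1) ^ Fintype.card V * q := by rw [hpE, hqE, rbPoly_comp_neg]
  refine ⟨hcomp, fun m => ?_⟩
  simpa using congrArg (eval (m : ℚ)) hcomp

/-- Reciprocity for the Redei-Berge polynomial: if `p` interpolates `N_X` and `q`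
interpolates `N_{complement of X}` at positive integers, then `p(-x) = (-1)^n q(x)`
as polynomials; in particular `p(-m) = (-1)^n q(m)` for all integers `m`. -/
theorem RB_reciprocity {V : Type*} [Fintype V]
    (E : V → V → Prop) (hE : ∀ x, ¬ E x x)
    (p q : Polynomial ℚ)
    (hp : ∀ m : ℕ, 1 ≤ m → p.eval (m : ℚ) = RBCount V E m)
    (hq : ∀ m : ℕ, 1 ≤ m → q.eval (m : ℚ) = RBCount V (complEdge E) m) :
    p.comp (-Polynomial.X) = (-1) ^ (Fintype.card V) * q ∧
      ∀ m : ℤ, p.eval (-(m : ℚ)) = (-1) ^ (Fintype.card V) * q.eval (m : ℚ) :=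
  RB_reciprocity_general E p q hp hq
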